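/- Let f : 2^N → ℝ≥0 be a non-negative symmetric submodular function and let X_n be the output of the deterministic two-sided greedy algorithm (starting with X_0 = ∅, Y_0 = N, and at each step adding u_i to X or removing it from Y according to which marginal gain a_i = f(X_{i−1}+u_i)−f(X_{i−1}) or b_i = f(Y_{i−1}−u_i)−f(Y_{i−1}) is larger). Then f(X_n) ≥ (1/2)·max_{S ⊆ N} f(S). -/

import Mathlib

/-!
Fix a target `S` and follow `OPT_i = (S ∪ X_i) ∩ Y_i` together with its counterpart for `Sᶜ`.
At step `i` exactly one of the two moves, and submodularity bounds its loss in value by the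
marginal gain the greedy rejected, hence by the increase of `f X_i + f Y_i`. So
`f OPT_i(S) + f OPT_i(Sᶜ) + f X_i + f Y_i` never decreases: it starts at
`f S + f Sᶜ + f ∅ + f N ≥ 2 f S` by symmetry and non-negativity, and ends at `4 f X_n`.
-/

open Finset

variable {α : Type*} [DecidableEq α]

def IsSubmodular (f : Finset α → ℝ) : Prop :=
  ∀ A B, f A + f B ≥ f (A ∪ B) + f (A ∩ B)

theorem IsSubmodular.add_le_insert_add_erase {f : Finset α → ℝ} (hf : IsSubmodular f)
    {A B : Finset α} {u : α} (hAB : A ⊆ B) (huA : u ∉ A) (huB : u ∈ B) :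
    f A + f B ≤ f (insert u A) + f (B.erase u) := by
  have hunion : insert u A ∪ B.erase u = B := by grind
  have hinter : insert u A ∩ B.erase u = A := by grind
  have := hf (insert u A) (B.erase u)
  rw [hunion, hinter] at this
  linarith

noncomputable def greedyStep (f : Finset α → ℝ) (u : α) (p : Finset α × Finset α) :
    Finset α × Finset α :=
  if f (insert u p.1) - f p.1 ≥ f (p.2.erase u) - f p.2 then (insert u p.1, p.2)
  else (p.1, p.2.erase u)

theorem greedyStep_fst_subset_snd_and_sdiff {f : Finset α → ℝ} {u : α} {X Y : Finset α}
    (hXY : X ⊆ Y) (huX : u ∉ X) (huY : u ∈ Y) :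
    (greedyStep f u (X, Y)).1 ⊆ (greedyStep f u (X, Y)).2 ∧
      (greedyStep f u (X, Y)).2 \ (greedyStep f u (X, Y)).1 = (Y \ X).erase u := by
  unfold greedyStep
  split_ifs
  · exact ⟨insert_subset huY hXY, sdiff_insert Y X u⟩
  · exact ⟨subset_erase.mpr ⟨hXY, huX⟩, erase_sdiff_comm Y X u⟩

/-- `(S ∪ X) ∩ Y` is the paper's `OPT_i` for the target `S`. -/
def greedyPotential (f : Finset α → ℝ) (S T : Finset α) (p : Finset α × Finset α) : ℝ :=
  f ((S ∪ p.1) ∩ p.2) + f ((T ∪ p.1) ∩ p.2) + f p.1 + f p.2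

theorem greedyPotential_comm (f : Finset α → ℝ) (S T : Finset α)
    (p : Finset α × Finset α) :
    greedyPotential f S T p = greedyPotential f T S p := by
  unfold greedyPotential
  ring

theorem greedyPotential_le_greedyStep_of_mem_of_notMem {f : Finset α → ℝ} (hf : IsSubmodular f)
    {u : α} {X Y S T : Finset α} (hXY : X ⊆ Y) (huX : u ∉ X) (huY : u ∈ Y)
    (huS : u ∈ S) (huT : u ∉ T) :
    greedyPotential f S T (X, Y) ≤ greedyPotential f S T (greedyStep f u (X, Y)) := by
  unfold greedyStep
  split_ifs with hgain
  · have hS : (S ∪ insert u X) ∩ Y = (S ∪ X) ∩ Y := by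
      rw [union_insert, insert_eq_of_mem (mem_union_left X huS)]
    have hT : f ((T ∪ X) ∩ Y) + f Y ≤ f ((T ∪ insert u X) ∩ Y) + f (Y.erase u) := by
      rw [union_insert, insert_inter_of_mem huY]
      exact hf.add_le_insert_add_erase inter_subset_right (by simp [huT, huX]) huY
    simp only [greedyPotential, hS]
    linarith
  · have hT : (T ∪ X) ∩ Y.erase u = (T ∪ X) ∩ Y := by
      rw [inter_erase, erase_eq_of_notMem (by simp [huT, huX])]
    have hS : f X + f ((S ∪ X) ∩ Y) ≤ f (insert u X) + f ((S ∪ X) ∩ Y.erase u) := by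
      rw [inter_erase]
      exact hf.add_le_insert_add_erase (subset_inter subset_union_right hXY) huX
        (by simp [huS, huY])
    simp only [greedyPotential, hT]
    linarith

theorem greedyPotential_compl_le_greedyStep [Fintype α] {f : Finset α → ℝ}
    (hf : IsSubmodular f)
    {u : α} {X Y : Finset α} (hXY : X ⊆ Y) (huX : u ∉ X) (huY : u ∈ Y) (S : Finset α) :
    greedyPotential f S Sᶜ (X, Y) ≤ greedyPotential f S Sᶜ (greedyStep f u (X, Y)) := by
  by_cases huS : u ∈ S
  · exact greedyPotential_le_greedyStep_of_mem_of_notMem hf hXY huX huY huS (by simpa)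
  · rw [greedyPotential_comm, greedyPotential_comm f S]
    exact greedyPotential_le_greedyStep_of_mem_of_notMem hf hXY huX huY (by simpa) huS

theorem greedyStep_eq_of_ite {f : Finset α → ℝ} {u : α} {X Y X' Y' : Finset α}
    (h : if f (insert u X) - f X ≥ f (Y.erase u) - f Y
      then X' = insert u X ∧ Y' = Y else X' = X ∧ Y' = Y.erase u) :
    (X', Y') = greedyStep f u (X, Y) := by
  unfold greedyStep
  split_ifs at h ⊢ <;> simp [h]

section GreedyRun

variable {n : ℕ} {f : Finset (Fin n) → ℝ} {X Y : ℕ → Finset (Fin n)}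
  (hX0 : X 0 = ∅) (hY0 : Y 0 = univ)
  (hrun : ∀ i : Fin n, (X (i + 1), Y (i + 1)) = greedyStep f i (X i, Y i))
include hX0 hY0 hrun

theorem greedyRun_subset_and_sdiff :
    ∀ k ≤ n, X k ⊆ Y k ∧ Y k \ X k = ({j | k ≤ (j : ℕ)} : Finset (Fin n))
  | 0, _ => by simp [hX0, hY0]
  | k + 1, hk => by
    obtain ⟨hXY, hsdiff⟩ := greedyRun_subset_and_sdiff k (by omega)
    have hu : (⟨k, hk⟩ : Fin n) ∈ Y k \ X k := by simp [hsdiff]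
    rw [mem_sdiff] at hu
    obtain ⟨hsub, hsdiff'⟩ := greedyStep_fst_subset_snd_and_sdiff (f := f) hXY hu.2 hu.1
    rw [← hrun ⟨k, hk⟩] at hsub hsdiff'
    refine ⟨hsub, ?_⟩
    rw [hsdiff', hsdiff]
    ext j
    simp only [mem_erase, ne_eq, Fin.ext_iff, mem_filter, mem_univ, true_and]
    omega

theorem greedyRun_last_eq : X n = Y n := by
  obtain ⟨hXY, hsdiff⟩ := greedyRun_subset_and_sdiff hX0 hY0 hrun n le_rfl
  refine hXY.antisymm (sdiff_eq_empty_iff_subset.mp ?_)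
  simp [hsdiff]

theorem greedyPotential_run_le (hf : IsSubmodular f) (S : Finset (Fin n)) :
    ∀ k ≤ n, greedyPotential f S Sᶜ (X 0, Y 0) ≤ greedyPotential f S Sᶜ (X k, Y k)
  | 0, _ => le_rfl
  | k + 1, hk => by
    obtain ⟨hXY, hsdiff⟩ := greedyRun_subset_and_sdiff hX0 hY0 hrun k (by omega)
    have hu : (⟨k, hk⟩ : Fin n) ∈ Y k \ X k := by simp [hsdiff]
    rw [mem_sdiff] at hu
    refine (greedyPotential_run_le hf S k (by omega)).trans ?_
    rw [hrun ⟨k, hk⟩]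
    exact greedyPotential_compl_le_greedyStep hf hXY hu.2 hu.1 S

end GreedyRun

/-- the deterministic two-sided greedy is a `1/2`-approximation for
unconstrained maximization of a non-negative symmetric submodular function:
`f(X_n) ≥ (1/2)·max_{S ⊆ N} f(S)`. -/
theorem two_sided_greedy_half_approximation (n : ℕ)
    (f : Finset (Fin n) → ℝ)
    (hnonneg : ∀ S, 0 ≤ f S)
    (hsym : ∀ S : Finset (Fin n), f S = f Sᶜ)
    (hsub : ∀ A B : Finset (Fin n), f A + f B ≥ f (A ∪ B) + f (A ∩ B))
    (X Y : ℕ → Finset (Fin n))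
    (hX0 : X 0 = ∅) (hY0 : Y 0 = Finset.univ)
    (hstep : ∀ i : Fin n,
      if f (insert i (X i)) - f (X i) ≥ f ((Y i).erase i) - f (Y i)
      then X (i + 1) = insert i (X i) ∧ Y (i + 1) = Y i
      else X (i + 1) = X i ∧ Y (i + 1) = (Y i).erase i) :
    ∀ S : Finset (Fin n), f (X n) ≥ f S / 2 := by
  intro S
  have hrun i := greedyStep_eq_of_ite (hstep i)
  have hXn := greedyRun_last_eq hX0 hY0 hrun
  have hpot := greedyPotential_run_le hX0 hY0 hrun hsub S n le_rfl
  simp only [greedyPotential, hX0, hY0, hXn, union_empty, inter_univ, union_inter_cancel_right]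
    at hpot
  rw [hXn]
  linarith [hsym S, hnonneg ∅, hnonneg univ]
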